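/- arXiv:gr-qc/0602118 — 3 statements merged into one kernel-verified Lean document; each statement's English description precedes it below -/
import Mathlib

section
/- Let B : ℝ⁴ → M₄(ℝ) be continuously differentiable with B(y) invertible for all y, with right Cartan connection C and excitation 2-forms G(y)(a,b) = C(y)(a)·b − C(y)(b)·a. Let f : ℝ⁴ → ℝ⁴ be twice continuously differentiable, let J(θ) ∈ M₄(ℝ) denote the Jacobian matrix of f at θ, and assume J(θ) is invertible. Define the transformed frame B̃(θ) = B(f(θ)) · J(θ), with right Cartan connection C̃ and excitation 2-forms G̃(θ)(u,v) = C̃(θ)(u)·v − C̃(θ)(v)·u. Then the excitations transform by the inverse Jacobian: G̃(θ)(u,v) = J(θ)⁻¹ · G(f(θ))(J(θ)u, J(θ)v) for all θ, u, v. (Thus the excitation 2-forms are 'impair': unlike the intensity 2-forms, they are not invariant under diffeomorphisms but pick up a factor of the inverse Jacobian.) -/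
open Matrix

noncomputable section

attribute [local instance] Matrix.normedAddCommGroup Matrix.normedSpace

/-- The right Cartan connection `C(x)(v) = B(x)⁻¹ · (D B)(x)(v)` of a basis frame. -/
def rightCartan (B : (Fin 4 → ℝ) → Matrix (Fin 4) (Fin 4) ℝ)
    (x v : Fin 4 → ℝ) : Matrix (Fin 4) (Fin 4) ℝ :=
  (B x)⁻¹ * fderiv ℝ B x v

/-- The vector of excitation (affine torsion) 2-forms
`G(x)(u,v) = C(x)(u)·v − C(x)(v)·u`. -/
def excitation (B : (Fin 4 → ℝ) → Matrix (Fin 4) (Fin 4) ℝ)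
    (x u v : Fin 4 → ℝ) : Fin 4 → ℝ :=
  rightCartan B x u *ᵥ v - rightCartan B x v *ᵥ u

/-- The Jacobian matrix of a map `f : ℝ⁴ → ℝ⁴` at a point. -/
def jacobian (f : (Fin 4 → ℝ) → (Fin 4 → ℝ)) (θ : Fin 4 → ℝ) :
    Matrix (Fin 4) (Fin 4) ℝ :=
  LinearMap.toMatrix' (fderiv ℝ f θ).toLinearMap

/-- Matrix multiplication as a continuous bilinear map (for the sup norm). -/
def mulCLM : Matrix (Fin 4) (Fin 4) ℝ →L[ℝ] Matrix (Fin 4) (Fin 4) ℝ →L[ℝ]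
    Matrix (Fin 4) (Fin 4) ℝ :=
  LinearMap.mkContinuous₂ (LinearMap.mul ℝ _) 4 (by
    intro A C
    rw [Matrix.norm_le_iff (by positivity)]
    intro i j
    calc ‖(LinearMap.mul ℝ _ A C) i j‖ = ‖∑ k, A i k * C k j‖ := by
          simp [LinearMap.mul_apply', Matrix.mul_apply]
      _ ≤ ∑ k, ‖A i k * C k j‖ := norm_sum_le _ _
      _ ≤ ∑ _k : Fin 4, ‖A‖ * ‖C‖ := Finset.sum_le_sum fun k _ => by
          rw [norm_mul]
          exact mul_le_mul (A.norm_entry_le_entrywise_sup_norm)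
            (C.norm_entry_le_entrywise_sup_norm) (norm_nonneg _) (norm_nonneg _)
      _ = 4 * ‖A‖ * ‖C‖ := by simp [Finset.sum_const]; ring)

@[simp] lemma mulCLM_apply (A C : Matrix (Fin 4) (Fin 4) ℝ) : mulCLM A C = A * C := rfl

/-- `toMatrix'` of a continuous linear map, as a continuous linear map. -/
def toMatCLM : ((Fin 4 → ℝ) →L[ℝ] (Fin 4 → ℝ)) →L[ℝ] Matrix (Fin 4) (Fin 4) ℝ :=
  LinearMap.toContinuousLinearMap
    ((LinearMap.toMatrix' : ((Fin 4 → ℝ) →ₗ[ℝ] (Fin 4 → ℝ)) ≃ₗ[ℝ] _).toLinearMap ∘ₗ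
      ContinuousLinearMap.coeLM ℝ)

@[simp] lemma toMatCLM_apply (l : (Fin 4 → ℝ) →L[ℝ] (Fin 4 → ℝ)) :
    toMatCLM l = LinearMap.toMatrix' (l : (Fin 4 → ℝ) →ₗ[ℝ] (Fin 4 → ℝ)) := rfl

lemma toMatCLM_mulVec (l : (Fin 4 → ℝ) →L[ℝ] (Fin 4 → ℝ)) (v : Fin 4 → ℝ) :
    toMatCLM l *ᵥ v = l v := by
  rw [toMatCLM_apply, ← Matrix.toLin'_apply, Matrix.toLin'_toMatrix']; rfl

lemma jacobian_mulVec (f : (Fin 4 → ℝ) → (Fin 4 → ℝ)) (θ w : Fin 4 → ℝ) :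
    jacobian f θ *ᵥ w = fderiv ℝ f θ w :=
  toMatCLM_mulVec _ _

/-- The excitation 2-forms are "impair": under a diffeomorphism `f`, the excitations of
the transformed frame `B̃(θ) = B(f(θ)) · J(θ)` pick up a factor of the inverse Jacobian. -/
theorem excitation_transforms_by_inverse_jacobian
    (B : (Fin 4 → ℝ) → Matrix (Fin 4) (Fin 4) ℝ)
    (hB : ContDiff ℝ 1 B) (hU : ∀ y, IsUnit (B y))
    (f : (Fin 4 → ℝ) → (Fin 4 → ℝ)) (hf : ContDiff ℝ 2 f)
    (hJ : ∀ θ, IsUnit (jacobian f θ)) :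
    ∀ θ u v : Fin 4 → ℝ,
      excitation (fun θ' => B (f θ') * jacobian f θ') θ u v =
        (jacobian f θ)⁻¹ *ᵥ
          excitation B (f θ) (jacobian f θ *ᵥ u) (jacobian f θ *ᵥ v) := by
  intro θ u v
  have hfd : Differentiable ℝ f := hf.differentiable two_ne_zero
  have hBd : Differentiable ℝ B := hB.differentiable one_ne_zero
  have hf' : ContDiff ℝ 1 (fderiv ℝ f) := hf.fderiv_right (by norm_num)
  -- derivative of the jacobian
  have hjac : HasFDerivAt (jacobian f)
      (toMatCLM.comp (fderiv ℝ (fderiv ℝ f) θ)) θ :=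
    toMatCLM.hasFDerivAt.comp θ ((hf'.differentiable one_ne_zero θ).hasFDerivAt)
  -- derivative of `B ∘ f`
  have hcomp : HasFDerivAt (fun θ' => B (f θ'))
      ((fderiv ℝ B (f θ)).comp (fderiv ℝ f θ)) θ :=
    (hBd (f θ)).hasFDerivAt.comp θ (hfd θ).hasFDerivAt
  -- derivative of the transformed frame, via the product rule
  have hBt : HasFDerivAt (fun θ' => B (f θ') * jacobian f θ')
      (mulCLM.precompR _ (B (f θ)) (toMatCLM.comp (fderiv ℝ (fderiv ℝ f) θ)) +
       mulCLM.precompL _ ((fderiv ℝ B (f θ)).comp (fderiv ℝ f θ)) (jacobian f θ)) θ :=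
    mulCLM.hasFDerivAt_of_bilinear hcomp hjac
  have key : ∀ w, fderiv ℝ (fun θ' => B (f θ') * jacobian f θ') θ w =
      fderiv ℝ B (f θ) (jacobian f θ *ᵥ w) * jacobian f θ +
        B (f θ) * toMatCLM (fderiv ℝ (fderiv ℝ f) θ w) := by
    intro w
    erw [hBt.fderiv]
    rw [jacobian_mulVec]
    simp [mulCLM, ContinuousLinearMap.precompR, add_comm]
    exact add_comm _ _
  -- cancellation of `B⁻¹ B`
  have hBinv : (B (f θ))⁻¹ * B (f θ) = 1 :=
    Matrix.nonsing_inv_mul _ ((Matrix.isUnit_iff_isUnit_det _).1 (hU (f θ)))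
  have hcan : ∀ M : Matrix (Fin 4) (Fin 4) ℝ, (B (f θ))⁻¹ * (B (f θ) * M) = M := fun M => by
    rw [← Matrix.mul_assoc, hBinv, Matrix.one_mul]
  -- symmetry of the second derivative
  have hsymm : toMatCLM (fderiv ℝ (fderiv ℝ f) θ u) *ᵥ v =
      toMatCLM (fderiv ℝ (fderiv ℝ f) θ v) *ᵥ u := by
    rw [toMatCLM_mulVec, toMatCLM_mulVec]
    exact (hf.contDiffAt.isSymmSndFDerivAt (by simp)).eq u v
  simp only [excitation, rightCartan]
  rw [key u, key v]
  have hsub : ∀ a b : Fin 4 → ℝ, (jacobian f θ)⁻¹ *ᵥ (a - b) =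
      (jacobian f θ)⁻¹ *ᵥ a - (jacobian f θ)⁻¹ *ᵥ b := fun a b => Matrix.mulVec_sub _ _ _
  simp only [Matrix.mul_inv_rev, Matrix.mul_add, Matrix.add_mulVec, hsub,
    Matrix.mulVec_mulVec, Matrix.mul_assoc, hcan]
  have hcancel : ((jacobian f θ)⁻¹ * toMatCLM (fderiv ℝ (fderiv ℝ f) θ u)) *ᵥ v =
      ((jacobian f θ)⁻¹ * toMatCLM (fderiv ℝ (fderiv ℝ f) θ v)) *ᵥ u := by
    rw [← Matrix.mulVec_mulVec, ← Matrix.mulVec_mulVec, hsymm]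
  rw [hcancel]
  abel

end
end

section
/- Let m ∈ ℝ and let (r,θ,φ) satisfy r > 0. Define α = (1 + m/(2r))² = γ²/(4r²) and β = (2 − m/r)/(2 + m/r) = δ/γ, where γ = 2r + m ≠ 0 and δ = 2r − m. Let B be the 4×4 Jacobian matrix of the map (r,θ,φ,τ) ↦ (r sinθ cosφ, r sinθ sinφ, r cosθ, τ), let f = diag(α, α, α, β), let η = diag(−1,−1,−1,1), and let B̂ = f·B. Then the congruent pullback metric is the isotropic Schwarzschild metric in spherical coordinates: B̂ᵀ·η·B̂ = diag( −(γ²/(4r²))², −(γ²/(4r))², −(γ²/(4r))²·sin²θ, (δ/γ)² ). -/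
open Matrix Real

/-!
Since `f` is diagonal, `(f B)ᵀ η (f B) = Bᵀ (f η f) B` with
`f η f = diag(-α², -α², -α², β²)`.
The columns of the Jacobian `B` of spherical coordinates are orthogonal, with squared
Euclidean lengths `1, r², r² sin² θ` in the spatial block and `1` in the time slot, so
`Bᵀ diag(a, a, a, b) B = diag(a, a r², a r² sin² θ, b)`. Taking `a = -α²`, `b = β²` and
`α r = γ² / (4 r)` gives the isotropic Schwarzschild metric.
-/

theorem Matrix.transpose_diagonal_mul_mul_diagonal_mul {n R : Type*} [Fintype n] [DecidableEq n]
    [CommSemiring R] (d e : n → R) (B : Matrix n n R) :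
    (diagonal d * B)ᵀ * diagonal e * (diagonal d * B) = Bᵀ * diagonal (d * e * d) * B :=
  calc (diagonal d * B)ᵀ * diagonal e * (diagonal d * B)
      = Bᵀ * (diagonal d * diagonal e * diagonal d) * B := by
        simp only [transpose_mul, diagonal_transpose, Matrix.mul_assoc]
    _ = Bᵀ * diagonal (d * e * d) * B := by rw [diagonal_mul_diagonal, diagonal_mul_diagonal]; rfl

noncomputable def sphericalJacobian (r θ φ : ℝ) : Matrix (Fin 4) (Fin 4) ℝ :=
  !![sin θ * cos φ, r * cos θ * cos φ, -(r * sin θ * sin φ), 0;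
     sin θ * sin φ, r * cos θ * sin φ, r * sin θ * cos φ, 0;
     cos θ, -(r * sin θ), 0, 0;
     0, 0, 0, 1]

theorem sphericalJacobian_transpose_mul_diagonal_mul (a b r θ φ : ℝ) :
    (sphericalJacobian r θ φ)ᵀ * diagonal ![a, a, a, b] * sphericalJacobian r θ φ =
      diagonal ![a, a * r ^ 2, a * (r ^ 2 * sin θ ^ 2), b] := by
  have hθ := sin_sq_add_cos_sq θ
  have hφ := sin_sq_add_cos_sq φ
  ext i j
  fin_cases i <;> fin_cases j <;>
    simp [sphericalJacobian, mul_apply, Fin.sum_univ_four] <;> grind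

theorem two_sub_div_div_two_add_div (m : ℝ) {r : ℝ} (hr : r ≠ 0) :
    (2 - m / r) / (2 + m / r) = (2 * r - m) / (2 * r + m) := by
  rw [← mul_div_mul_right _ _ hr]
  congr 1 <;> field_simp

theorem isotropic_schwarzschild_congruent_metric_general
    (m r θ φ : ℝ) (hr : 0 < r) :
    (1 + m / (2 * r)) ^ 2 = (2 * r + m) ^ 2 / (4 * r ^ 2) ∧
    (2 - m / r) / (2 + m / r) = (2 * r - m) / (2 * r + m) ∧
    ((Matrix.diagonal
        ![(2 * r + m) ^ 2 / (4 * r ^ 2), (2 * r + m) ^ 2 / (4 * r ^ 2),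
          (2 * r + m) ^ 2 / (4 * r ^ 2), (2 * r - m) / (2 * r + m)] *
      !![sin θ * cos φ, r * cos θ * cos φ, -(r * sin θ * sin φ), 0;
         sin θ * sin φ, r * cos θ * sin φ, r * sin θ * cos φ, 0;
         cos θ, -(r * sin θ), 0, 0;
         0, 0, 0, 1])ᵀ *
      Matrix.diagonal ![(-1 : ℝ), -1, -1, 1] *
      (Matrix.diagonal
        ![(2 * r + m) ^ 2 / (4 * r ^ 2), (2 * r + m) ^ 2 / (4 * r ^ 2),
          (2 * r + m) ^ 2 / (4 * r ^ 2), (2 * r - m) / (2 * r + m)] *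
      !![sin θ * cos φ, r * cos θ * cos φ, -(r * sin θ * sin φ), 0;
         sin θ * sin φ, r * cos θ * sin φ, r * sin θ * cos φ, 0;
         cos θ, -(r * sin θ), 0, 0;
         0, 0, 0, 1]) =
      Matrix.diagonal
        ![-((2 * r + m) ^ 2 / (4 * r ^ 2)) ^ 2, -((2 * r + m) ^ 2 / (4 * r)) ^ 2,
          -(((2 * r + m) ^ 2 / (4 * r)) ^ 2 * sin θ ^ 2),
          ((2 * r - m) / (2 * r + m)) ^ 2]) := by
  have hr₀ : r ≠ 0 := hr.ne'
  refine ⟨by field_simp; ring, two_sub_div_div_two_add_div m hr₀, ?_⟩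
  have hαr : (2 * r + m) ^ 2 / (4 * r) = (2 * r + m) ^ 2 / (4 * r ^ 2) * r := by
    field_simp
  set α := (2 * r + m) ^ 2 / (4 * r ^ 2)
  set β := (2 * r - m) / (2 * r + m)
  have hfηf :
      ![α, α, α, β] * ![-1, -1, -1, 1] * ![α, α, α, β] = ![-α ^ 2, -α ^ 2, -α ^ 2, β ^ 2] := by
    ext i; fin_cases i <;> simp <;> ring
  have hB := sphericalJacobian_transpose_mul_diagonal_mul (-α ^ 2) (β ^ 2) r θ φ
  rw [sphericalJacobian] at hB
  rw [transpose_diagonal_mul_mul_diagonal_mul, hfηf, hB, hαr]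
  congr 1
  ext i; fin_cases i <;> simp <;> ring

/-- Embedding the isotropic Schwarzschild metric in a basis frame: perturbing the
spherical-to-Cartesian Jacobian frame `B` by `f = diag(α,α,α,β)` yields a frame whose
congruent pullback metric is the isotropic Schwarzschild metric in spherical
coordinates. -/
theorem isotropic_schwarzschild_congruent_metric
    (m r θ φ : ℝ) (hr : 0 < r) (hγ : 2 * r + m ≠ 0) :
    (1 + m / (2 * r)) ^ 2 = (2 * r + m) ^ 2 / (4 * r ^ 2) ∧
    (2 - m / r) / (2 + m / r) = (2 * r - m) / (2 * r + m) ∧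
    ((Matrix.diagonal
        ![(2 * r + m) ^ 2 / (4 * r ^ 2), (2 * r + m) ^ 2 / (4 * r ^ 2),
          (2 * r + m) ^ 2 / (4 * r ^ 2), (2 * r - m) / (2 * r + m)] *
      !![sin θ * cos φ, r * cos θ * cos φ, -(r * sin θ * sin φ), 0;
         sin θ * sin φ, r * cos θ * sin φ, r * sin θ * cos φ, 0;
         cos θ, -(r * sin θ), 0, 0;
         0, 0, 0, 1])ᵀ *
      Matrix.diagonal ![(-1 : ℝ), -1, -1, 1] *
      (Matrix.diagonal
        ![(2 * r + m) ^ 2 / (4 * r ^ 2), (2 * r + m) ^ 2 / (4 * r ^ 2),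
          (2 * r + m) ^ 2 / (4 * r ^ 2), (2 * r - m) / (2 * r + m)] *
      !![sin θ * cos φ, r * cos θ * cos φ, -(r * sin θ * sin φ), 0;
         sin θ * sin φ, r * cos θ * sin φ, r * sin θ * cos φ, 0;
         cos θ, -(r * sin θ), 0, 0;
         0, 0, 0, 1]) =
      Matrix.diagonal
        ![-((2 * r + m) ^ 2 / (4 * r ^ 2)) ^ 2, -((2 * r + m) ^ 2 / (4 * r)) ^ 2,
          -(((2 * r + m) ^ 2 / (4 * r)) ^ 2 * sin θ ^ 2),
          ((2 * r - m) / (2 * r + m)) ^ 2]) :=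
  isotropic_schwarzschild_congruent_metric_general m r θ φ hr
end

section
/- Let A₁, A₂, A₃, φ : ℝ⁴ → ℝ be continuously differentiable with φ(x) ≠ 0 for all x, and let B : ℝ⁴ → M₄(ℝ) be the wave-affine basis frame with rows (1,0,0,0), (0,1,0,0), (0,0,1,0), (A₁, A₂, A₃, −φ). Let C be its right Cartan connection and G(x)(u,v) = C(x)(u)·v − C(x)(v)·u its vector of excitation (affine torsion) 2-forms. Let A be the scalar 1-form A(x)(v) = A₁(x)v₁ + A₂(x)v₂ + A₃(x)v₃ − φ(x)v₄ with F = dA. Then the first three components of G vanish identically, and the fourth component satisfies G⁴(x)(u,v) = −F(x)(u,v)/φ(x); i.e. the vector of excitation 2-forms is (0, 0, 0, −F/φ). -/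
open Matrix

noncomputable section

attribute [local instance] Matrix.normedAddCommGroup Matrix.normedSpace

set_option maxHeartbeats 2000000 in
/-- For the wave-affine basis frame with bottom row `(A₁, A₂, A₃, −φ)`, the first three
excitation (affine torsion) 2-forms vanish and the fourth equals `−F/φ`, where
`F = dA` is the field-intensity 2-form of the Action 1-form
`A = A₁dx + A₂dy + A₃dz − φdt`. -/
theorem wave_affine_excitations
    (A1 A2 A3 φ : (Fin 4 → ℝ) → ℝ)
    (h1 : ContDiff ℝ 1 A1) (h2 : ContDiff ℝ 1 A2) (h3 : ContDiff ℝ 1 A3)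
    (hφ : ContDiff ℝ 1 φ) (hφ0 : ∀ x, φ x ≠ 0) :
    let B : (Fin 4 → ℝ) → Matrix (Fin 4) (Fin 4) ℝ := fun x =>
      !![1, 0, 0, 0;
         0, 1, 0, 0;
         0, 0, 1, 0;
         A1 x, A2 x, A3 x, -φ x]
    let C : (Fin 4 → ℝ) → (Fin 4 → ℝ) → Matrix (Fin 4) (Fin 4) ℝ := fun x v =>
      (B x)⁻¹ * fderiv ℝ B x v
    let G : (Fin 4 → ℝ) → (Fin 4 → ℝ) → (Fin 4 → ℝ) → (Fin 4 → ℝ) := fun x u v =>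
      C x u *ᵥ v - C x v *ᵥ u
    let A : (Fin 4 → ℝ) → (Fin 4 → ℝ) → ℝ := fun x v =>
      A1 x * v 0 + A2 x * v 1 + A3 x * v 2 - φ x * v 3
    let F : (Fin 4 → ℝ) → (Fin 4 → ℝ) → (Fin 4 → ℝ) → ℝ := fun x u v =>
      fderiv ℝ (fun y => A y v) x u - fderiv ℝ (fun y => A y u) x v
    ∀ x u v : Fin 4 → ℝ,
      G x u v 0 = 0 ∧ G x u v 1 = 0 ∧ G x u v 2 = 0 ∧
      G x u v 3 = -F x u v / φ x := by
  intro B C G A F x u v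
  have d1 : DifferentiableAt ℝ A1 x := (h1.differentiable one_ne_zero).differentiableAt
  have d2 : DifferentiableAt ℝ A2 x := (h2.differentiable one_ne_zero).differentiableAt
  have d3 : DifferentiableAt ℝ A3 x := (h3.differentiable one_ne_zero).differentiableAt
  have dφ : DifferentiableAt ℝ φ x := (hφ.differentiable one_ne_zero).differentiableAt
  set f1 := fderiv ℝ A1 x with hf1
  set f2 := fderiv ℝ A2 x with hf2
  set f3 := fderiv ℝ A3 x with hf3
  set fp := fderiv ℝ φ x with hfp
  -- rewrite B as constant plus scalar multiples
  have hBeq : B = fun y => (!![1,0,0,0;0,1,0,0;0,0,1,0;0,0,0,0] : Matrix (Fin 4) (Fin 4) ℝ)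
      + A1 y • !![0,0,0,0;0,0,0,0;0,0,0,0;1,0,0,0]
      + A2 y • !![0,0,0,0;0,0,0,0;0,0,0,0;0,1,0,0]
      + A3 y • !![0,0,0,0;0,0,0,0;0,0,0,0;0,0,1,0]
      - φ y • !![0,0,0,0;0,0,0,0;0,0,0,0;0,0,0,1] := by
    funext y
    ext i j
    fin_cases i <;> fin_cases j <;>
      simp [B, Matrix.add_apply, Matrix.sub_apply, Matrix.smul_apply, Matrix.vecHead, Matrix.vecTail]
  have hB : HasFDerivAt B
      (((((0 : (Fin 4 → ℝ) →L[ℝ] Matrix (Fin 4) (Fin 4) ℝ)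
        + f1.smulRight !![0,0,0,0;0,0,0,0;0,0,0,0;1,0,0,0])
        + f2.smulRight !![0,0,0,0;0,0,0,0;0,0,0,0;0,1,0,0])
        + f3.smulRight !![0,0,0,0;0,0,0,0;0,0,0,0;0,0,1,0])
        - fp.smulRight !![0,0,0,0;0,0,0,0;0,0,0,0;0,0,0,1]) x := by
    rw [hBeq]
    exact ((((hasFDerivAt_const _ x).add (d1.hasFDerivAt.smul_const _)).add
      (d2.hasFDerivAt.smul_const _)).add (d3.hasFDerivAt.smul_const _)).sub
      (dφ.hasFDerivAt.smul_const _)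
  have hD : ∀ w : Fin 4 → ℝ, fderiv ℝ B x w =
      !![0,0,0,0;0,0,0,0;0,0,0,0; f1 w, f2 w, f3 w, -(fp w)] := by
    intro w
    rw [hB.fderiv]
    ext i j
    fin_cases i <;> fin_cases j <;>
      simp [Matrix.add_apply, Matrix.sub_apply, Matrix.smul_apply,
        ContinuousLinearMap.add_apply, ContinuousLinearMap.sub_apply,
        ContinuousLinearMap.smulRight_apply, Matrix.vecHead, Matrix.vecTail]
  have hinv : (B x)⁻¹ =
      !![1,0,0,0;0,1,0,0;0,0,1,0;
         A1 x/φ x, A2 x/φ x, A3 x/φ x, -(1/φ x)] := by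
    apply Matrix.inv_eq_right_inv
    ext i j
    fin_cases i <;> fin_cases j <;>
      simp [B, Matrix.mul_apply, Fin.sum_univ_four, Matrix.one_apply, Matrix.vecHead, Matrix.vecTail] <;>
      field_simp [hφ0 x] <;> ring
  have hC : ∀ w : Fin 4 → ℝ, C x w =
      !![0,0,0,0;0,0,0,0;0,0,0,0;
         -(f1 w/φ x), -(f2 w/φ x), -(f3 w/φ x), fp w/φ x] := by
    intro w
    show (B x)⁻¹ * fderiv ℝ B x w = _
    rw [hinv, hD w]
    ext i j
    fin_cases i <;> fin_cases j <;>
      simp [Matrix.mul_apply, Fin.sum_univ_four, Matrix.vecHead, Matrix.vecTail] <;> ring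
  have hFA : ∀ w z : Fin 4 → ℝ, fderiv ℝ (fun y => A y z) x w =
      f1 w * z 0 + f2 w * z 1 + f3 w * z 2 - fp w * z 3 := by
    intro w z
    have hh : HasFDerivAt (fun y => A y z)
        ((((z 0 • f1 + z 1 • f2) + z 2 • f3) - z 3 • fp)) x := by
      exact (((d1.hasFDerivAt.mul_const (z 0)).add
        (d2.hasFDerivAt.mul_const (z 1))).add
        (d3.hasFDerivAt.mul_const (z 2))).sub (dφ.hasFDerivAt.mul_const (z 3))
    rw [hh.fderiv]
    simp [ContinuousLinearMap.add_apply, ContinuousLinearMap.sub_apply]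
    ring
  have hG : ∀ k, G x u v k = (C x u *ᵥ v) k - (C x v *ᵥ u) k := fun k => rfl
  refine ⟨?_, ?_, ?_, ?_⟩ <;>
    (simp only [hG, hC, F, hFA]
     simp [Matrix.mulVec, dotProduct, Fin.sum_univ_four, Matrix.vecHead, Matrix.vecTail]) <;>
    field_simp <;> ring
end
end
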